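/- Let G : ℍ^{N×S} → ℍ^{M×P} be ℝ-differentiable at Q ∈ ℍ^{N×S}, let F : ℍ^{M×P} → ℍ^{R×T} be ℝ-differentiable at G(Q), set H(Q) := F(G(Q)), and let μ ∈ ℍ, μ ≠ 0. Then the GHR chain rule holds: D_{Q^μ}H(Q) = Σ_{ν∈{1,i,j,k}} (D_{X^ν}F)(G(Q)) · (D_{Q^μ}G^ν)(Q), where G^ν denotes the function Q ↦ (G(Q))^ν (entrywise involution x^ν = νxν⁻¹) and (D_{X^ν}F)(G(Q)) is the GHR Jacobian of F with respect to the ν-rotation of its matrix argument, evaluated at G(Q). -/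

import Mathlib

open scoped Quaternion

noncomputable section

/-- The imaginary unit `i` of the quaternions. -/
def qI : ℍ[ℝ] := ⟨0, 1, 0, 0⟩
/-- The imaginary unit `j` of the quaternions. -/
def qJ : ℍ[ℝ] := ⟨0, 0, 1, 0⟩
/-- The imaginary unit `k` of the quaternions. -/
def qK : ℍ[ℝ] := ⟨0, 0, 0, 1⟩

/-- The `N × S` quaternion matrix with entry `d` at position `(n,s)` and `0` elsewhere. -/
def single {N S : ℕ} (n : Fin N) (s : Fin S) (d : ℍ[ℝ]) : Fin N → Fin S → ℍ[ℝ] :=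
  Pi.single n (Pi.single s d)

/-- Real directional (Fréchet) derivative of a scalar function of a matrix variable, in the
direction `d` at the single entry `(n,s)` (the other entries held fixed). -/
def pd {N S : ℕ} (f : (Fin N → Fin S → ℍ[ℝ]) → ℍ[ℝ]) (Q : Fin N → Fin S → ℍ[ℝ])
    (n : Fin N) (s : Fin S) (d : ℍ[ℝ]) : ℍ[ℝ] :=
  fderiv ℝ f Q (single n s d)

/-- Left GHR derivative `∂f/∂q_{ns}^μ` of a scalar function `f` with respect to the entry
`q_{ns}` of its matrix argument. -/
def ghrE {N S : ℕ} (μ : ℍ[ℝ]) (f : (Fin N → Fin S → ℍ[ℝ]) → ℍ[ℝ])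
    (Q : Fin N → Fin S → ℍ[ℝ]) (n : Fin N) (s : Fin S) : ℍ[ℝ] :=
  (1 / 4 : ℝ) • (pd f Q n s 1 - pd f Q n s qI * (μ * qI * μ⁻¹)
    - pd f Q n s qJ * (μ * qJ * μ⁻¹) - pd f Q n s qK * (μ * qK * μ⁻¹))

/-- The GHR Jacobian `D_{Q^μ}F(Q)`: the `MP × NS` quaternion matrix whose `((m,p),(n,s))` entry
is the left GHR derivative `∂F_{mp}/∂q_{ns}^μ`. -/
def ghrJac {N S M P : ℕ} (μ : ℍ[ℝ])
    (F : (Fin N → Fin S → ℍ[ℝ]) → (Fin M → Fin P → ℍ[ℝ]))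
    (Q : Fin N → Fin S → ℍ[ℝ]) : Matrix (Fin M × Fin P) (Fin N × Fin S) ℍ[ℝ] :=
  Matrix.of fun mp ns => ghrE μ (fun X => F X mp.1 mp.2) Q ns.1 ns.2

/-- Entrywise quaternion rotation `x ↦ ν x ν⁻¹` of a matrix. -/
def rotM {M P : ℕ} (ν : ℍ[ℝ]) (A : Fin M → Fin P → ℍ[ℝ]) : Fin M → Fin P → ℍ[ℝ] :=
  fun m p => ν * A m p * ν⁻¹

/-!
For an `ℝ`-linear `L : ℍ → ℍ` one has `L d = ∑_ν (∂L/∂q^ν) d^ν` over `ν ∈ {1, i, j, k}`: expanding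
the right-hand side, `i^ν d^ν = (i d)^ν`, and `∑_ν x^ν = 4 Re x` turns it into
`d.re L 1 + d.imI L i + d.imJ L j + d.imK L k`. Apply this to the partial differentials of `F`
at `G Q`, compose with the real chain rule, and pull the resulting coefficients out of the GHR
derivative with respect to `q^μ`, which is left `ℍ`-linear in the function it differentiates.
-/

section Units
open Quaternion

lemma qI_mul_self : qI * qI = -1 := by
  ext <;> simp [re_mul, imI_mul, imJ_mul, imK_mul] <;> simp [qI]

lemma qJ_mul_self : qJ * qJ = -1 := by
  ext <;> simp [re_mul, imI_mul, imJ_mul, imK_mul] <;> simp [qJ]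

lemma qK_mul_self : qK * qK = -1 := by
  ext <;> simp [re_mul, imI_mul, imJ_mul, imK_mul] <;> simp [qK]

lemma re_qI_mul (x : ℍ[ℝ]) : (qI * x).re = -x.imI := by simp [re_mul]; simp [qI]

lemma re_qJ_mul (x : ℍ[ℝ]) : (qJ * x).re = -x.imJ := by simp [re_mul]; simp [qJ]

lemma re_qK_mul (x : ℍ[ℝ]) : (qK * x).re = -x.imK := by simp [re_mul]; simp [qK]

lemma re_smul_one_add_im_smul (x : ℍ[ℝ]) :
    x.re • 1 + x.imI • qI + x.imJ • qJ + x.imK • qK = x := by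
  ext <;> simp <;> simp [qI, qJ, qK]

end Units

lemma ne_zero_of_mul_self_eq_neg_one {K : Type*} [Ring K] [Nontrivial K] {u : K}
    (h : u * u = -1) : u ≠ 0 := by
  rintro rfl
  simp at h

lemma inv_eq_neg_of_mul_self_eq_neg_one {K : Type*} [DivisionRing K] {u : K}
    (h : u * u = -1) : u⁻¹ = -u :=
  inv_eq_of_mul_eq_one_right (by rw [mul_neg, h, neg_neg])

lemma conj_mul₀ {G₀ : Type*} [GroupWithZero G₀] {b : G₀} (hb : b ≠ 0) (a c : G₀) :
    b * a * b⁻¹ * (b * c * b⁻¹) = b * (a * c) * b⁻¹ := by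
  simp [mul_assoc, inv_mul_cancel_left₀ hb]

def ghrUnit : Fin 4 → ℍ[ℝ] := ![1, qI, qJ, qK]

lemma ghrUnit_ne_zero (ν : Fin 4) : ghrUnit ν ≠ 0 := by
  fin_cases ν
  exacts [one_ne_zero, ne_zero_of_mul_self_eq_neg_one qI_mul_self,
    ne_zero_of_mul_self_eq_neg_one qJ_mul_self, ne_zero_of_mul_self_eq_neg_one qK_mul_self]

lemma sum_ghrUnit_conj (x : ℍ[ℝ]) :
    ∑ ν, ghrUnit ν * x * (ghrUnit ν)⁻¹ = ((4 * x.re : ℝ) : ℍ[ℝ]) := by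
  simp only [Fin.sum_univ_four, ghrUnit, Matrix.cons_val, inv_one, one_mul, mul_one,
    inv_eq_neg_of_mul_self_eq_neg_one qI_mul_self, inv_eq_neg_of_mul_self_eq_neg_one qJ_mul_self,
    inv_eq_neg_of_mul_self_eq_neg_one qK_mul_self]
  ext <;> simp [Quaternion.re_mul, Quaternion.imI_mul, Quaternion.imJ_mul, Quaternion.imK_mul]
    <;> simp [qI, qJ, qK]
  ring

/-- `ghrE` with the partial differential replaced by an arbitrary function `ℍ → ℍ`. -/
def ghrCoeff (μ : ℍ[ℝ]) : (ℍ[ℝ] → ℍ[ℝ]) →ₗ[ℍ[ℝ]] ℍ[ℝ] where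
  toFun f := (1 / 4 : ℝ) • (f 1 - f qI * (μ * qI * μ⁻¹) - f qJ * (μ * qJ * μ⁻¹)
    - f qK * (μ * qK * μ⁻¹))
  map_add' f g := by
    rw [← smul_add]
    congr 1
    simp only [Pi.add_apply, add_mul]
    abel
  map_smul' c f := by
    simp only [Pi.smul_apply, smul_eq_mul, mul_assoc, ← mul_sub, RingHom.id_apply, mul_smul_comm]

lemma ghrCoeff_apply (μ : ℍ[ℝ]) (f : ℍ[ℝ] → ℍ[ℝ]) :
    ghrCoeff μ f = (1 / 4 : ℝ) • (f 1 - f qI * (μ * qI * μ⁻¹) - f qJ * (μ * qJ * μ⁻¹)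
      - f qK * (μ * qK * μ⁻¹)) :=
  rfl

theorem sum_ghrCoeff_mul_conj (L : ℍ[ℝ] →ₗ[ℝ] ℍ[ℝ]) (d : ℍ[ℝ]) :
    ∑ ν, ghrCoeff (ghrUnit ν) L * (ghrUnit ν * d * (ghrUnit ν)⁻¹) = L d := by
  have expand (ν : Fin 4) : ghrCoeff (ghrUnit ν) L * (ghrUnit ν * d * (ghrUnit ν)⁻¹)
      = (1 / 4 : ℝ) • (L 1 * (ghrUnit ν * d * (ghrUnit ν)⁻¹)
          - L qI * (ghrUnit ν * (qI * d) * (ghrUnit ν)⁻¹)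
          - L qJ * (ghrUnit ν * (qJ * d) * (ghrUnit ν)⁻¹)
          - L qK * (ghrUnit ν * (qK * d) * (ghrUnit ν)⁻¹)) := by
    simp only [ghrCoeff_apply, smul_mul_assoc, sub_mul, mul_assoc (L _),
      conj_mul₀ (ghrUnit_ne_zero ν)]
  simp only [expand, ← Finset.smul_sum, Finset.sum_sub_distrib, ← Finset.mul_sum,
    sum_ghrUnit_conj, re_qI_mul, re_qJ_mul, re_qK_mul, Quaternion.mul_coe_eq_smul]
  conv_rhs => rw [← re_smul_one_add_im_smul d]
  simp only [map_add, map_smul]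
  module

lemma HasFDerivAt.apply_apply {𝕜 E F ι κ : Type*} [NontriviallyNormedField 𝕜]
    [NormedAddCommGroup E] [NormedSpace 𝕜 E] [NormedAddCommGroup F] [NormedSpace 𝕜 F]
    [Fintype ι] [Fintype κ] {Φ : E → ι → κ → F} {Φ' : E →L[𝕜] ι → κ → F} {x : E}
    (h : HasFDerivAt Φ Φ' x) (i : ι) (k : κ) :
    HasFDerivAt (fun y => Φ y i k)
      ((ContinuousLinearMap.proj k).comp ((ContinuousLinearMap.proj i).comp Φ')) x :=
  hasFDerivAt_pi'.1 (hasFDerivAt_pi'.1 h i) k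

section Jacobian

variable {N S M P : ℕ} {Φ : (Fin N → Fin S → ℍ[ℝ]) → (Fin M → Fin P → ℍ[ℝ])}
  {Φ' : (Fin N → Fin S → ℍ[ℝ]) →L[ℝ] (Fin M → Fin P → ℍ[ℝ])} {X : Fin N → Fin S → ℍ[ℝ]}

lemma ghrJac_apply_eq_ghrCoeff {j : Fin M × Fin P} {ℓ : (Fin N → Fin S → ℍ[ℝ]) →L[ℝ] ℍ[ℝ]}
    (h : HasFDerivAt (fun Y => Φ Y j.1 j.2) ℓ X) (μ : ℍ[ℝ]) (k : Fin N × Fin S) :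
    ghrJac μ Φ X j k = ghrCoeff μ (fun d => ℓ (single k.1 k.2 d)) := by
  simp only [ghrJac, Matrix.of_apply, ghrE, pd, h.fderiv]
  rfl

lemma ghrJac_apply_of_hasFDerivAt (h : HasFDerivAt Φ Φ' X) (μ : ℍ[ℝ]) (j : Fin M × Fin P)
    (k : Fin N × Fin S) :
    ghrJac μ Φ X j k = ghrCoeff μ (fun d => Φ' (single k.1 k.2 d) j.1 j.2) :=
  ghrJac_apply_eq_ghrCoeff (h.apply_apply j.1 j.2) μ k

lemma ghrJac_rotM_apply_of_hasFDerivAt (h : HasFDerivAt Φ Φ' X) (μ ν : ℍ[ℝ])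
    (j : Fin M × Fin P) (k : Fin N × Fin S) :
    ghrJac μ (fun Y => rotM ν (Φ Y)) X j k
      = ghrCoeff μ (fun d => ν * Φ' (single k.1 k.2 d) j.1 j.2 * ν⁻¹) := by
  rw [ghrJac_apply_eq_ghrCoeff (Φ := fun Y => rotM ν (Φ Y))
    (((h.apply_apply j.1 j.2).const_mul ν).mul_const' ν⁻¹)]
  rfl

end Jacobian

lemma sum_single_apply {M P : ℕ} (w : Fin M → Fin P → ℍ[ℝ]) :
    ∑ j : Fin M × Fin P, single j.1 j.2 (w j.1 j.2) = w := by
  funext m p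
  simp [single, Fintype.sum_prod_type, Finset.sum_apply, Pi.single_apply,
    apply_ite (fun g : Fin P → ℍ[ℝ] => g p)]

section ChainRule

variable {N S M P R T : ℕ} {G : (Fin N → Fin S → ℍ[ℝ]) → (Fin M → Fin P → ℍ[ℝ])}
  {F : (Fin M → Fin P → ℍ[ℝ]) → (Fin R → Fin T → ℍ[ℝ])}
  {G' : (Fin N → Fin S → ℍ[ℝ]) →L[ℝ] (Fin M → Fin P → ℍ[ℝ])}
  {F' : (Fin M → Fin P → ℍ[ℝ]) →L[ℝ] (Fin R → Fin T → ℍ[ℝ])} {Q : Fin N → Fin S → ℍ[ℝ]}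

theorem ghrJac_comp_apply (hG : HasFDerivAt G G' Q) (hF : HasFDerivAt F F' (G Q)) (μ : ℍ[ℝ])
    (i : Fin R × Fin T) (k : Fin N × Fin S) :
    ghrJac μ (fun X => F (G X)) Q i k = ∑ ν, ∑ j,
      ghrJac (ghrUnit ν) F (G Q) i j * ghrJac μ (fun X => rotM (ghrUnit ν) (G X)) Q j k := by
  let L (j : Fin M × Fin P) : ℍ[ℝ] →ₗ[ℝ] ℍ[ℝ] :=
    (LinearMap.proj i.2 ∘ₗ LinearMap.proj i.1) ∘ₗ F'.toLinearMap ∘ₗ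
      (LinearMap.single ℝ _ j.1 ∘ₗ LinearMap.single ℝ (fun _ => ℍ[ℝ]) j.2)
  have expand (v : Fin N → Fin S → ℍ[ℝ]) : F' (G' v) i.1 i.2 = ∑ ν, ∑ j,
      ghrCoeff (ghrUnit ν) (L j) * (ghrUnit ν * G' v j.1 j.2 * (ghrUnit ν)⁻¹) := by
    rw [Finset.sum_comm]
    simp only [sum_ghrCoeff_mul_conj]
    conv_lhs => rw [← sum_single_apply (G' v)]
    simp only [map_sum, Finset.sum_apply]
    rfl
  have hfun : (fun d => F' (G' (single k.1 k.2 d)) i.1 i.2) = ∑ ν, ∑ j,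
      ghrCoeff (ghrUnit ν) (L j) •
        fun d => ghrUnit ν * G' (single k.1 k.2 d) j.1 j.2 * (ghrUnit ν)⁻¹ := by
    funext d
    simp only [expand, Finset.sum_apply, Pi.smul_apply, smul_eq_mul]
  rw [ghrJac_apply_of_hasFDerivAt (Φ := fun X => F (G X)) (hF.comp Q hG)]
  simp only [ghrJac_apply_of_hasFDerivAt hF, ghrJac_rotM_apply_of_hasFDerivAt hG,
    ContinuousLinearMap.comp_apply, hfun, map_sum, map_smul, smul_eq_mul]
  rfl

theorem ghrJac_comp (hG : HasFDerivAt G G' Q) (hF : HasFDerivAt F F' (G Q)) (μ : ℍ[ℝ]) :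
    ghrJac μ (fun X => F (G X)) Q = ∑ ν,
      ghrJac (ghrUnit ν) F (G Q) * ghrJac μ (fun X => rotM (ghrUnit ν) (G X)) Q := by
  refine Matrix.ext fun i k => ?_
  simp only [ghrJac_comp_apply hG hF, Matrix.sum_apply, Matrix.mul_apply]

end ChainRule

theorem ghr_chain_rule_general {N S M P R T : ℕ} (μ : ℍ[ℝ])
    (G : (Fin N → Fin S → ℍ[ℝ]) → (Fin M → Fin P → ℍ[ℝ]))
    (F : (Fin M → Fin P → ℍ[ℝ]) → (Fin R → Fin T → ℍ[ℝ]))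
    (Q : Fin N → Fin S → ℍ[ℝ])
    (hG : DifferentiableAt ℝ G Q) (hF : DifferentiableAt ℝ F (G Q)) :
    ghrJac μ (fun X => F (G X)) Q =
      ghrJac (1 : ℍ[ℝ]) F (G Q) * ghrJac μ (fun X => rotM (1 : ℍ[ℝ]) (G X)) Q
        + ghrJac qI F (G Q) * ghrJac μ (fun X => rotM qI (G X)) Q
        + ghrJac qJ F (G Q) * ghrJac μ (fun X => rotM qJ (G X)) Q
        + ghrJac qK F (G Q) * ghrJac μ (fun X => rotM qK (G X)) Q := by
  rw [ghrJac_comp hG.hasFDerivAt hF.hasFDerivAt, Fin.sum_univ_four]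
  rfl

/-- **GHR chain rule** (Theorem 2, first identity):
`D_{Q^μ}(F ∘ G)(Q) = Σ_{ν∈{1,i,j,k}} (D_{X^ν}F)(G(Q)) · (D_{Q^μ}G^ν)(Q)`. -/
theorem ghr_chain_rule {N S M P R T : ℕ} (μ : ℍ[ℝ]) (hμ : μ ≠ 0)
    (G : (Fin N → Fin S → ℍ[ℝ]) → (Fin M → Fin P → ℍ[ℝ]))
    (F : (Fin M → Fin P → ℍ[ℝ]) → (Fin R → Fin T → ℍ[ℝ]))
    (Q : Fin N → Fin S → ℍ[ℝ])
    (hG : DifferentiableAt ℝ G Q) (hF : DifferentiableAt ℝ F (G Q)) :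
    ghrJac μ (fun X => F (G X)) Q =
      ghrJac (1 : ℍ[ℝ]) F (G Q) * ghrJac μ (fun X => rotM (1 : ℍ[ℝ]) (G X)) Q
        + ghrJac qI F (G Q) * ghrJac μ (fun X => rotM qI (G X)) Q
        + ghrJac qJ F (G Q) * ghrJac μ (fun X => rotM qJ (G X)) Q
        + ghrJac qK F (G Q) * ghrJac μ (fun X => rotM qK (G X)) Q :=
  ghr_chain_rule_general μ G F Q hG hF
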